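/- arXiv:math/9902072 — 2 statements merged into one kernel-verified Lean document; each statement's English description precedes it below -/
import Mathlib

section
/- Let λ be a Young diagram inside the k×(n−k) rectangle with ℓ nonzero rows, and let r_{ij} be the shifts of λ. Let ε ∈ E satisfy ε_t = + for all t ≤ k − ℓ and ε_t = − for all t > k + λ_1. Then r_λ(ε) ≥ 0, and r_λ(ε) = 0 if and only if ε = w_λ·𝟏. -/
open scoped Classical

set_option maxHeartbeats 1000000
set_option synthInstance.maxHeartbeats 1000000

noncomputable section

/-- The field ℚ(v) of rational functions. -/
abbrev F : Type := RatFunc ℚ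

/-- The variable v. -/
def v : F := RatFunc.X

/-- The quantum integer [r] = (v^r - v^{-r})/(v - v^{-1}). -/
def qint (r : ℕ) : F := (v ^ r - v⁻¹ ^ r) / (v - v⁻¹)

/-- Sequences of n signs (`true` = `+`) with exactly k pluses. -/
abbrev Stt (n k : ℕ) := {ε : Fin n → Bool // (Finset.univ.filter fun t => ε t = true).card = k}

/-- The adjacent transposition s_m ∈ S_n (1-based: swaps positions m and m+1). -/
def sperm (n m : ℕ) : Equiv.Perm (Fin n) :=
  if h : 1 ≤ m ∧ m < n then Equiv.swap ⟨m - 1, by omega⟩ ⟨m, h.2⟩ else 1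

/-- Action of w ∈ S_n on sequences: (w·ε)_{w(t)} = ε_t. -/
def actE {n : ℕ} (w : Equiv.Perm (Fin n)) (ε : Fin n → Bool) : Fin n → Bool :=
  fun u => ε (w⁻¹ u)

lemma card_actE {n k : ℕ} (w : Equiv.Perm (Fin n)) (ε : Fin n → Bool)
    (h : (Finset.univ.filter fun t => ε t = true).card = k) :
    (Finset.univ.filter fun t => actE w ε t = true).card = k := by
  rw [← h]
  apply Finset.card_bij (fun t _ => w⁻¹ t)
  · intro a ha
    exact Finset.mem_filter.mpr ⟨Finset.mem_univ _, (Finset.mem_filter.mp ha).2⟩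
  · intro a _ b _ hab
    exact (Equiv.injective _) hab
  · intro b hb
    exact ⟨w b, Finset.mem_filter.mpr ⟨Finset.mem_univ _,
      by simpa [actE] using (Finset.mem_filter.mp hb).2⟩, by simp⟩

/-- Action of S_n on the set E of sequences with k pluses. -/
def actS {n k : ℕ} (w : Equiv.Perm (Fin n)) (ε : Stt n k) : Stt n k :=
  ⟨actE w ε.1, card_actE w ε.1 ε.2⟩

/-- The module M, free over ℚ(v) with basis E. -/
abbrev M (n k : ℕ) := Stt n k → F

/-- The basis vector of M corresponding to ε ∈ E. -/
def bv {n k : ℕ} (ε : Stt n k) : M n k := Pi.single ε 1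

/-- The sequence 𝟏 = (+,…,+,−,…,−) (k pluses then n−k minuses). -/
def oneSeq (n k : ℕ) : Fin n → Bool := fun t => decide ((t : ℕ) < k)

lemma card_oneSeq (n k : ℕ) (h : k ≤ n) :
    (Finset.univ.filter fun t => oneSeq n k t = true).card = k := by
  have : (Finset.univ.filter fun t => oneSeq n k t = true)
      = Finset.univ.map (Fin.castLEEmb h) := by
    ext t
    simp only [Finset.mem_filter, Finset.mem_univ, true_and, oneSeq, decide_eq_true_eq,
      Finset.mem_map]
    constructor
    · intro ht; exact ⟨⟨t, ht⟩, rfl⟩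
    · rintro ⟨s, rfl⟩; exact s.2
  rw [this, Finset.card_map, Finset.card_univ, Fintype.card_fin]

/-- 𝟏 as an element of E. -/
def oneS (n k : ℕ) (h : k ≤ n) : Stt n k := ⟨oneSeq n k, card_oneSeq n k h⟩

/-- The operator T_m on M (1 ≤ m ≤ n−1), defined on basis elements. -/
def Thk (n k : ℕ) (m : ℕ) : M n k →ₗ[F] M n k :=
  (Pi.basisFun F (Stt n k)).constr ℕ fun ε =>
    if h : 1 ≤ m ∧ m < n then
      let a := ε.1 ⟨m - 1, by omega⟩
      let b := ε.1 ⟨m, h.2⟩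
      if a = true ∧ b = false then bv (actS (sperm n m) ε)
      else if a = b then (-v⁻¹) • bv ε
      else bv (actS (sperm n m) ε) + (v - v⁻¹) • bv ε
    else 0

/-- A Young diagram inside the k×(n−k) rectangle, given by its row lengths
(1-based: row i has lam i boxes). -/
def IsYoung (n k : ℕ) (lam : ℕ → ℕ) : Prop :=
  (∀ i, 1 ≤ i → lam (i + 1) ≤ lam i) ∧ lam 1 ≤ n - k ∧ (∀ i, k < i → lam i = 0)

/-- The boxes of λ, listed row by row from the bottom row to the top row,
each row from its last box to its first (so box (1,1) comes last). -/
def boxList (k : ℕ) (lam : ℕ → ℕ) : List (ℕ × ℕ) :=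
  ((List.range k).reverse.map fun i' =>
    (List.range (lam (i' + 1))).reverse.map fun j' => (i' + 1, j' + 1)).flatten

/-- The word of w_λ: letter k+j−i for box (i,j). -/
def wword (k : ℕ) (lam : ℕ → ℕ) : List ℕ := (boxList k lam).map fun b => k + b.2 - b.1

/-- The permutation w_λ = ∏_{(i,j)∈λ} s_{k+j−i} (box (1,1) rightmost). -/
def wperm (n k : ℕ) (lam : ℕ → ℕ) : Equiv.Perm (Fin n) := ((wword k lam).map (sperm n)).prod

/-- w_λ·𝟏 as an element of E. -/
def wSt (n k : ℕ) (h : k ≤ n) (lam : ℕ → ℕ) : Stt n k := actS (wperm n k lam) (oneS n k h)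

/-- r is the system of shifts of λ: r_{ij} = max(r_{i,j+1}, r_{i+1,j}) + 1 on boxes of λ,
and r_{ij} = 0 off λ. -/
def IsShifts (lam : ℕ → ℕ) (r : ℕ → ℕ → ℕ) : Prop :=
  ∀ i j, r i j = if 1 ≤ i ∧ 1 ≤ j ∧ j ≤ lam i then max (r i (j + 1)) (r (i + 1) j) + 1 else 0

/-- The operator X_λ = ∏_{(i,j)∈λ} (T_{k+j−i} − v^{r_{ij}}/[r_{ij}]), the factor of
box (1,1) applied first. -/
def Xop (n k : ℕ) (lam : ℕ → ℕ) (r : ℕ → ℕ → ℕ) : Module.End F (M n k) :=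
  ((boxList k lam).map fun b =>
    (Thk n k (k + b.2 - b.1) - (v ^ r b.1 b.2 / qint (r b.1 b.2)) • (1 : Module.End F (M n k)) : Module.End F (M n k))).prod

/-- O(v^m): rational functions with a zero of order ≥ m at v = 0. -/
def Ozero (m : ℕ) : Set F :=
  {f | ∃ p q : Polynomial ℚ, Polynomial.eval 0 q ≠ 0 ∧
        f = v ^ m * (algebraMap (Polynomial ℚ) F p / algebraMap (Polynomial ℚ) F q)}

/-- Value of a sequence at the 1-based position t. -/
def posVal {n : ℕ} (ε : Fin n → Bool) (t : ℕ) : Bool :=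
  if h : 1 ≤ t ∧ t ≤ n then ε ⟨t - 1, by omega⟩ else false

/-- a(i) = k + λ_i − i + 1 for 1 ≤ i ≤ k, and a(i) = 0 for i > k. -/
def aF (k : ℕ) (lam : ℕ → ℕ) (i : ℕ) : ℕ := if i ≤ k then k + lam i + 1 - i else 0

/-- The contribution r_t(ε) to the weight. -/
def weightT (k : ℕ) (lam : ℕ → ℕ) (r : ℕ → ℕ → ℕ) {n : ℕ} (ε : Fin n → Bool) (t : ℕ) : ℕ :=
  ∑ i ∈ Finset.Icc 1 k,
    ((if posVal ε t = false ∧ 1 ≤ lam i ∧ t = aF k lam i then r i (lam i) - 1 else 0) +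
     (if posVal ε t = true ∧ aF k lam (i + 1) < t ∧ t < aF k lam i then r i (t + i - k) else 0))

/-- The weight r_λ(ε) = Σ_{t=1}^n r_t(ε). -/
def weight (n k : ℕ) (lam : ℕ → ℕ) (r : ℕ → ℕ → ℕ) (ε : Fin n → Bool) : ℕ :=
  ∑ t ∈ Finset.Icc 1 n, weightT k lam r ε t

/-- 𝓛_λ = Σ_ε O(v^{r_λ(ε)}) ε. -/
def Lset (n k : ℕ) (lam : ℕ → ℕ) (r : ℕ → ℕ → ℕ) : Set (M n k) :=
  {m | ∀ ε : Stt n k, m ε ∈ Ozero (weight n k lam r ε.1)}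

/-- The length (number of inversions) of a permutation. -/
def len {n : ℕ} (w : Equiv.Perm (Fin n)) : ℕ :=
  (Finset.univ.filter fun p : Fin n × Fin n => p.1 < p.2 ∧ w p.2 < w p.1).card

/-- The parabolic subgroup W_J = S_k × S_{n−k}: permutations mapping {1,…,k} to itself. -/
def WJ (n k : ℕ) : Set (Equiv.Perm (Fin n)) :=
  {σ | ∀ t : Fin n, (t : ℕ) < k → ((σ t : ℕ) < k)}

/-- W^J: permutations of minimal length in their coset w·W_J. -/
def Wmin (n k : ℕ) : Set (Equiv.Perm (Fin n)) :=
  {w | ∀ σ ∈ WJ n k, len w ≤ len (w * σ)}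

/-- The variable x_p (1-based position p) in ℚ(v)[x_1,…,x_n]. -/
def xv (n p : ℕ) : MvPolynomial (Fin n) F :=
  if h : 1 ≤ p ∧ p ≤ n then MvPolynomial.X ⟨p - 1, by omega⟩ else 0

/-- Exchange of the variables x_i and x_{i+1} (1-based, 1 ≤ i ≤ n−1). -/
def swapf (n i : ℕ) (f : MvPolynomial (Fin n) F) : MvPolynomial (Fin n) F :=
  if h : 1 ≤ i ∧ i < n then
    MvPolynomial.rename (Equiv.swap ⟨i - 1, by omega⟩ ⟨i, h.2⟩) f
  else f

/-- The divided difference ∂_i f = (f − s_i f)/(x_i − x_{i+1}). -/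
def ddiff (n i : ℕ) (f : MvPolynomial (Fin n) F) : MvPolynomial (Fin n) F :=
  if h : ∃ g, f - swapf n i f = (xv n i - xv n (i + 1)) * g then h.choose else 0

/-- The operator ∇_i f = (v x_{i+1} − v⁻¹ x_i)·∂_i f. -/
def nabla (n i : ℕ) (f : MvPolynomial (Fin n) F) : MvPolynomial (Fin n) F :=
  (MvPolynomial.C v * xv n (i + 1) - MvPolynomial.C v⁻¹ * xv n i) * ddiff n i f

/-- Parenthesis matching: minuses (`false`) are openers, pluses (`true`) are closers;
each plus is matched with the most recent unmatched minus, i.e. each minus with the first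
subsequent unmatched plus.  Returns the list of matched pairs (p,q) of 1-based positions
and the list of unmatched minus positions. -/
def matchAux : List Bool → ℕ → List ℕ → List (ℕ × ℕ) × List ℕ
  | [], _, stack => ([], stack)
  | b :: rest, pos, stack =>
    if b then
      match stack with
      | [] => matchAux rest (pos + 1) []
      | p :: stack' =>
        let res := matchAux rest (pos + 1) stack'
        ((p, pos) :: res.1, res.2)
    else matchAux rest (pos + 1) (pos :: stack)

/-- d(ε) = #{(p,q) : p < q, ε_p = −, ε_q = +}. -/
def dstat {n : ℕ} (ε : Fin n → Bool) : ℕ :=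
  (Finset.univ.filter fun pq : Fin n × Fin n =>
    pq.1 < pq.2 ∧ ε pq.1 = false ∧ ε pq.2 = true).card

/-- The polynomial Q_ε. -/
def Qpoly (n : ℕ) (ε : Fin n → Bool) : MvPolynomial (Fin n) F :=
  MvPolynomial.C (v⁻¹ ^ dstat ε) *
    ((matchAux (List.ofFn ε) 1 []).1.map fun pq =>
        xv n pq.1 - MvPolynomial.C (v ^ (pq.2 + 1 - pq.1)) * xv n pq.2).prod *
    ((matchAux (List.ofFn ε) 1 []).2.map fun p => xv n p).prod

/-- The operator T_m on M′ (the parabolic module induced from T_j ↦ v). -/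
def Thk' (n k : ℕ) (m : ℕ) : M n k →ₗ[F] M n k :=
  (Pi.basisFun F (Stt n k)).constr ℕ fun ε =>
    if h : 1 ≤ m ∧ m < n then
      let a := ε.1 ⟨m - 1, by omega⟩
      let b := ε.1 ⟨m, h.2⟩
      if a = true ∧ b = false then bv (actS (sperm n m) ε)
      else if a = b then v • bv ε
      else bv (actS (sperm n m) ε) + (v - v⁻¹) • bv ε
    else 0

/-- The map Φ : M′ → ℚ(v)[x_1,…,x_n], ε ↦ v^{−d(ε)} ∏_{t : ε_t = −} x_t. -/
def Phi (n k : ℕ) : M n k →ₗ[F] MvPolynomial (Fin n) F :=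
  (Pi.basisFun F (Stt n k)).constr ℕ fun ε =>
    MvPolynomial.C (v⁻¹ ^ dstat ε.1) *
      ∏ t ∈ Finset.univ.filter (fun t => ε.1 t = false), MvPolynomial.X t

/-- The space P(k,n): polynomials homogeneous of total degree n−k, of degree ≤ 1 in each
variable. -/
def Pspace (n k : ℕ) : Set (MvPolynomial (Fin n) F) :=
  {f | f.IsHomogeneous (n - k) ∧ ∀ t : Fin n, f.degreeOf t ≤ 1}

/-!
Write `a(i)` for `aF k lam i`. Applying the boxes of row `i` of `λ` in turn moves the `i`-th
plus of `𝟏`, sitting at position `k - i + 1`, along `λ_i` minuses to position `a(i)`, and the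
later rows only act on positions below `a(i)`. Hence the pluses of `w_λ·𝟏` sit exactly at
`a(1) > ⋯ > a(k)`, and no term of `r_λ(w_λ·𝟏)` can fire. Conversely, a plus of `ε` at any other
position `t ≤ a(1)` lies strictly between some `a(i+1)` and `a(i)`, and then `t` contributes the
shift of the box `(i, t - k + i)`, which is positive; since `ε` and `w_λ·𝟏` both have `k` pluses,
`ε = w_λ·𝟏` as soon as all pluses of `ε` lie among the `a(i)`.
-/

lemma exists_lt_le_of_lt_le {α : Type*} [LinearOrder α] (f : ℕ → α) {t : α} :
    ∀ {k : ℕ}, f (k + 1) < t → t ≤ f 1 → ∃ i ∈ Finset.Icc 1 k, f (i + 1) < t ∧ t ≤ f i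
  | 0, hlt, hle => absurd hle (not_le.mpr hlt)
  | k + 1, hlt, hle => by
    by_cases hk : f (k + 1) < t
    · obtain ⟨i, hi, h⟩ := exists_lt_le_of_lt_le f hk hle
      exact ⟨i, Finset.Icc_subset_Icc_right k.le_succ hi, h⟩
    · exact ⟨k + 1, Finset.mem_Icc.mpr ⟨k.succ_pos, le_rfl⟩, hlt, not_lt.mp hk⟩

lemma Stt.eq_of_le {n k : ℕ} {ε ε' : Stt n k} (h : ε.1 ≤ ε'.1) : ε = ε' := by
  have hsub : (Finset.univ.filter fun t => ε.1 t = true) ⊆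
      Finset.univ.filter fun t => ε'.1 t = true := by
    intro t
    simpa only [Finset.mem_filter, Finset.mem_univ, true_and] using Bool.le_iff_imp.mp (h t)
  have heq := Finset.eq_of_subset_of_card_le hsub (by rw [ε.2, ε'.2])
  refine Subtype.ext (funext fun t => Bool.eq_iff_iff.mpr ?_)
  simpa only [Finset.mem_filter, Finset.mem_univ, true_and] using Finset.ext_iff.mp heq t

lemma posVal_succ {n : ℕ} (ε : Fin n → Bool) (u : Fin n) : posVal ε (u + 1) = ε u := by
  rw [posVal, dif_pos ⟨u.val.succ_pos, u.isLt⟩]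
  rfl

lemma aF_of_le {k i : ℕ} (lam : ℕ → ℕ) (hi : i ≤ k) : aF k lam i = k + lam i + 1 - i :=
  if_pos hi

lemma aF_of_lt {k i : ℕ} (lam : ℕ → ℕ) (hi : k < i) : aF k lam i = 0 :=
  if_neg (not_le.mpr hi)

lemma IsShifts.pos {lam : ℕ → ℕ} {r : ℕ → ℕ → ℕ} (hr : IsShifts lam r) {i j : ℕ}
    (hi : 1 ≤ i) (hj : 1 ≤ j) (hji : j ≤ lam i) : 0 < r i j := by
  rw [hr i j, if_pos ⟨hi, hj, hji⟩]
  exact Nat.succ_pos _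

namespace IsYoung

variable {n k : ℕ} {lam : ℕ → ℕ}

lemma antitoneOn (hY : IsYoung n k lam) : AntitoneOn lam (Set.Ici 1) :=
  antitoneOn_nat_Ici_of_succ_le fun i hi => hY.1 i hi

lemma aF_antitoneOn (hY : IsYoung n k lam) : AntitoneOn (aF k lam) (Set.Icc 1 k) := by
  intro i hi j hj hij
  have := hY.antitoneOn hi.1 hj.1 hij
  rw [aF_of_le lam hi.2, aF_of_le lam hj.2]
  omega

end IsYoung

section WordAction

variable {n k : ℕ} {lam : ℕ → ℕ}

/-- The letters of a row of length `L` whose first box carries the letter `p + 1`. -/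
def rowWord (p L : ℕ) : List ℕ := (List.range L).reverse.map fun j => p + j + 1

lemma rowWord_succ (p L : ℕ) : rowWord p (L + 1) = (p + L + 1) :: rowWord p L := by
  simp [rowWord, List.range_succ]

lemma sperm_apply_of_ne {p : ℕ} {x : Fin n} (h0 : (x : ℕ) ≠ p) (h1 : (x : ℕ) ≠ p + 1) :
    sperm n (p + 1) x = x := by
  unfold sperm
  split_ifs
  · exact Equiv.swap_apply_of_ne_of_ne (fun h => h0 (by simp [h])) (fun h => h1 (by simp [h]))
  · rfl

lemma sperm_apply_of_eq {p : ℕ} (hp : p + 1 < n) {x : Fin n} (hx : (x : ℕ) = p) :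
    (sperm n (p + 1) x : ℕ) = p + 1 := by
  have : x = ⟨p + 1 - 1, by omega⟩ := Fin.ext (by simp [hx])
  rw [sperm, dif_pos ⟨p.succ_pos, hp⟩, this, Equiv.swap_apply_left]

lemma prod_rowWord_apply_of_not_mem {p L : ℕ} {x : Fin n} (hx : (x : ℕ) < p ∨ p + L < x) :
    ((rowWord p L).map (sperm n)).prod x = x := by
  induction L with
  | zero => simp [rowWord]
  | succ L ih =>
    rw [rowWord_succ, List.map_cons, List.prod_cons, Equiv.Perm.mul_apply, ih (by omega)]
    exact sperm_apply_of_ne (by omega) (by omega)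

lemma prod_rowWord_apply_start {p L : ℕ} (h : p + L < n) {x : Fin n} (hx : (x : ℕ) = p) :
    (((rowWord p L).map (sperm n)).prod x : ℕ) = p + L := by
  induction L with
  | zero => simpa [rowWord] using hx
  | succ L ih =>
    rw [rowWord_succ, List.map_cons, List.prod_cons, Equiv.Perm.mul_apply]
    exact sperm_apply_of_eq (by omega) (ih (by omega))

/-- `R_m ⋯ R_1`, where `R_i` is the product of the letters of row `i` of `λ`. -/
def rowsPerm (n k : ℕ) (lam : ℕ → ℕ) (m : ℕ) : Equiv.Perm (Fin n) :=
  ((List.range m).reverse.map fun i =>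
    ((rowWord (k - i - 1) (lam (i + 1))).map (sperm n)).prod).prod

lemma wperm_eq_rowsPerm (n k : ℕ) (lam : ℕ → ℕ) : wperm n k lam = rowsPerm n k lam k := by
  have hword : wword k lam =
      ((List.range k).reverse.map fun i => rowWord (k - i - 1) (lam (i + 1))).flatten := by
    simp only [wword, boxList, rowWord, List.map_flatten, List.map_map]
    refine congrArg _ (List.map_congr_left fun i hi => ?_)
    simp only [List.mem_reverse, List.mem_range] at hi
    simp only [Function.comp_apply, List.map_map]
    refine List.map_congr_left fun j _ => ?_
    simp only [Function.comp_apply]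
    omega
  rw [wperm, hword, List.map_flatten, List.prod_flatten]
  simp only [List.map_map]
  rfl

lemma rowsPerm_apply (hkn : k ≤ n) (hY : IsYoung n k lam) {m : ℕ} (hm : m ≤ k) {x : Fin n}
    (hx : (x : ℕ) < k) :
    (rowsPerm n k lam m x : ℕ) = if k - m ≤ x then x + lam (k - x) else x := by
  induction m with
  | zero => simp [rowsPerm]; omega
  | succ m ih =>
    have hy := ih (by omega)
    simp only [rowsPerm, List.range_succ, List.reverse_append, List.reverse_singleton,
      List.singleton_append, List.map_cons, List.prod_cons, Equiv.Perm.mul_apply] at hy ⊢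
    have hlam : lam (m + 1) ≤ lam 1 := hY.antitoneOn (Set.mem_Ici.mpr le_rfl)
      (Set.mem_Ici.mpr (by omega)) (by omega)
    have hrow : k - m - 1 + lam (m + 1) < n := by have := hY.2.1; omega
    rcases lt_trichotomy (x : ℕ) (k - m - 1) with hlt | heq | hgt
    · rw [if_neg (by omega)] at hy ⊢
      rw [prod_rowWord_apply_of_not_mem (Or.inl (by omega)), hy]
    · rw [if_neg (by omega)] at hy
      rw [if_pos (by omega), prod_rowWord_apply_start hrow (by omega)]
      rw [show k - x = m + 1 by omega]
      omega
    · have hle : lam (m + 1) ≤ lam (k - x) := hY.antitoneOn (Set.mem_Ici.mpr (by omega))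
        (Set.mem_Ici.mpr (by omega)) (by omega)
      rw [if_pos (by omega)] at hy ⊢
      rw [prod_rowWord_apply_of_not_mem (Or.inr (by omega)), hy]

lemma wperm_apply (hkn : k ≤ n) (hY : IsYoung n k lam) {x : Fin n} (hx : (x : ℕ) < k) :
    (wperm n k lam x : ℕ) = x + lam (k - x) := by
  rw [wperm_eq_rowsPerm, rowsPerm_apply hkn hY le_rfl hx, if_pos (by omega)]

lemma wSt_apply_eq_true_iff (hkn : k ≤ n) (hY : IsYoung n k lam) (u : Fin n) :
    (wSt n k hkn lam).1 u = true ↔ ∃ i ∈ Finset.Icc 1 k, (u : ℕ) + 1 = aF k lam i := by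
  obtain ⟨x, rfl⟩ := (wperm n k lam).surjective u
  change oneSeq n k ((wperm n k lam)⁻¹ (wperm n k lam x)) = true ↔ _
  rw [Equiv.Perm.coe_inv, Equiv.symm_apply_apply]
  simp only [oneSeq, decide_eq_true_eq, Finset.mem_Icc]
  constructor
  · intro hx
    refine ⟨k - x, ⟨by omega, by omega⟩, ?_⟩
    rw [wperm_apply hkn hY hx, aF_of_le lam (by omega)]
    omega
  · rintro ⟨i, ⟨hi, hik⟩, hx⟩
    have hw : wperm n k lam x = wperm n k lam ⟨k - i, by omega⟩ := by
      rw [aF_of_le lam hik] at hx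
      refine Fin.ext ?_
      rw [wperm_apply hkn hY (x := ⟨k - i, _⟩) (by simp only; omega)]
      simp only [show k - (k - i) = i by omega]
      omega
    rw [(wperm n k lam).injective hw]
    simp only
    omega

end WordAction

section Weight

variable {n k : ℕ} {lam : ℕ → ℕ}

lemma shift_le_weight (r : ℕ → ℕ → ℕ) {ε : Fin n → Bool} {t i : ℕ} (ht : t ∈ Finset.Icc 1 n)
    (hi : i ∈ Finset.Icc 1 k) (hplus : posVal ε t = true) (hlo : aF k lam (i + 1) < t)
    (hhi : t < aF k lam i) : r i (t + i - k) ≤ weight n k lam r ε :=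
  calc r i (t + i - k)
      = if posVal ε t = true ∧ aF k lam (i + 1) < t ∧ t < aF k lam i
          then r i (t + i - k) else 0 := (if_pos ⟨hplus, hlo, hhi⟩).symm
    _ ≤ weightT k lam r ε t := by
      refine le_trans ?_ (Finset.single_le_sum (fun j _ => Nat.zero_le _) hi)
      exact le_add_self
    _ ≤ weight n k lam r ε := Finset.single_le_sum (fun s _ => Nat.zero_le _) ht

lemma weight_pos_of_plus_between {r : ℕ → ℕ → ℕ} (hr : IsShifts lam r) {ε : Fin n → Bool}
    {t i : ℕ} (ht : t ∈ Finset.Icc 1 n) (hi : i ∈ Finset.Icc 1 k) (hplus : posVal ε t = true)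
    (hlo : aF k lam (i + 1) < t) (hhi : t < aF k lam i) : 0 < weight n k lam r ε := by
  have hi' := Finset.mem_Icc.mp hi
  have hbox : 0 < r i (t + i - k) := by
    refine hr.pos hi'.1 ?_ ?_
    · rcases Nat.lt_or_ge k (i + 1) with h | h
      · have := (Finset.mem_Icc.mp ht).1
        omega
      · rw [aF_of_le lam h] at hlo
        omega
    · rw [aF_of_le lam hi'.2] at hhi
      omega
  exact hbox.trans_le (shift_le_weight r ht hi hplus hlo hhi)

lemma weight_wSt (hkn : k ≤ n) (hY : IsYoung n k lam) (r : ℕ → ℕ → ℕ) :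
    weight n k lam r (wSt n k hkn lam).1 = 0 := by
  refine Finset.sum_eq_zero fun t ht => Finset.sum_eq_zero fun i hi => ?_
  have ht' := Finset.mem_Icc.mp ht
  obtain ⟨u, rfl⟩ : ∃ u : Fin n, (u : ℕ) + 1 = t := ⟨⟨t - 1, by omega⟩, Nat.sub_add_cancel ht'.1⟩
  have hi' := Finset.mem_Icc.mp hi
  rw [posVal_succ, Nat.add_eq_zero_iff, ite_eq_right_iff, ite_eq_right_iff]
  constructor
  · rintro ⟨hminus, -, hu⟩
    simpa [hminus] using (wSt_apply_eq_true_iff hkn hY u).mpr ⟨i, hi, hu⟩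
  · rintro ⟨hplus, hlo, hhi⟩
    obtain ⟨j, hj, hu⟩ := (wSt_apply_eq_true_iff hkn hY u).mp hplus
    have hj' := Finset.mem_Icc.mp hj
    have hij : i < j := by
      by_contra! hji
      have := hY.aF_antitoneOn ⟨hj'.1, hj'.2⟩ ⟨hi'.1, hi'.2⟩ hji
      omega
    have : aF k lam j ≤ aF k lam (i + 1) :=
      hY.aF_antitoneOn ⟨by omega, by omega⟩ ⟨hj'.1, hj'.2⟩ hij
    omega

end Weight

theorem weight_nonneg_eq_zero_iff_general (n k : ℕ) (hkn : k < n)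
    (lam : ℕ → ℕ) (hY : IsYoung n k lam)
    (r : ℕ → ℕ → ℕ) (hr : IsShifts lam r)
    (ε : Stt n k)
    (hminus : ∀ t : Fin n, k + lam 1 < (t : ℕ) + 1 → ε.1 t = false) :
    0 ≤ weight n k lam r ε.1 ∧
    (weight n k lam r ε.1 = 0 ↔ ε = wSt n k hkn.le lam) := by
  refine ⟨Nat.zero_le _, fun hw => Stt.eq_of_le fun u => Bool.le_iff_imp.mpr fun hu => ?_,
    fun he => he ▸ weight_wSt hkn.le hY r⟩
  rw [wSt_apply_eq_true_iff hkn.le hY]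
  by_contra! hne
  have hk : 1 ≤ k := ε.2 ▸ Finset.card_pos.mpr ⟨u, by simpa using hu⟩
  have hle : (u : ℕ) + 1 ≤ aF k lam 1 := by
    rw [aF_of_le lam hk]
    by_contra! hlt
    simp [hminus u (by omega)] at hu
  obtain ⟨i, hi, hlo, hle'⟩ := exists_lt_le_of_lt_le (aF k lam) (k := k)
    (by rw [aF_of_lt lam k.lt_succ_self]; omega) hle
  have hhi : (u : ℕ) + 1 < aF k lam i := lt_of_le_of_ne hle' (hne i hi)
  exact (weight_pos_of_plus_between hr (Finset.mem_Icc.mpr ⟨by omega, u.isLt⟩) hi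
    ((posVal_succ ε.1 u).trans hu) hlo hhi).ne' hw

/-- If λ has ℓ nonzero rows, r are the shifts of λ, and ε ∈ E has
ε_t = + for t ≤ k−ℓ and ε_t = − for t > k+λ₁, then r_λ(ε) ≥ 0, with equality iff
ε = w_λ·𝟏. -/
theorem weight_nonneg_eq_zero_iff (n k : ℕ) (hk : 0 < k) (hkn : k < n)
    (lam : ℕ → ℕ) (hY : IsYoung n k lam)
    (ℓ : ℕ) (hl1 : ∀ i, 1 ≤ i → i ≤ ℓ → 1 ≤ lam i) (hl2 : ∀ i, ℓ < i → lam i = 0)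
    (r : ℕ → ℕ → ℕ) (hr : IsShifts lam r)
    (ε : Stt n k)
    (hplus : ∀ t : Fin n, (t : ℕ) + 1 ≤ k - ℓ → ε.1 t = true)
    (hminus : ∀ t : Fin n, k + lam 1 < (t : ℕ) + 1 → ε.1 t = false) :
    0 ≤ weight n k lam r ε.1 ∧
    (weight n k lam r ε.1 = 0 ↔ ε = wSt n k hkn.le lam) :=
  weight_nonneg_eq_zero_iff_general n k hkn lam hY r hr ε hminus

end
end

section
/- The ℚ(v)-linear map Φ : M′ → ℚ(v)[x_1,…,x_n] defined on basis elements by Φ(ε) = v^{−d(ε)} ∏_{t : ε_t = −} x_t is a linear isomorphism of M′ onto P(k,n), and it intertwines the operators T_i − v with ∇_i: Φ((T_i − v)·m) = ∇_i(Φ(m)) for all m ∈ M′ and all 1 ≤ i ≤ n−1. -/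
open scoped Classical

set_option maxHeartbeats 1000000
set_option synthInstance.maxHeartbeats 1000000

noncomputable section

/-! Φ sends the basis vector ε to a nonzero multiple of the squarefree monomial in the variables
at the minus positions of ε. These monomials are pairwise distinct and are exactly the squarefree
monomials of degree n − k, which gives injectivity and the range.

For the intertwining relation fix i and look for one polynomial g with both
Φε − s_i Φε = (x_i − x_{i+1}) g and Φ((T_i − v)ε) = (v x_{i+1} − v⁻¹ x_i) g. If ε_i = ε_{i+1}
both sides vanish. Otherwise Φε is c x_{i+1} R or c x_i R, with c = v^{−d(ε)} and R symmetric in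
x_i, x_{i+1}; swapping an adjacent pair (+,−) raises d by exactly one, so g = ∓cR works. Both
conditions are linear in ε, so such a g exists for every m, and then g = ∂_i Φ(m). -/

open MvPolynomial

lemma v_ne_zero : v ≠ 0 := RatFunc.X_ne_zero

section MinusPositions

variable {n : ℕ}

def minusSet (ε : Fin n → Bool) : Finset (Fin n) := Finset.univ.filter fun t => ε t = false

def minusExp (ε : Fin n → Bool) : Fin n →₀ ℕ := ∑ t ∈ minusSet ε, Finsupp.single t 1

lemma mem_minusSet {ε : Fin n → Bool} {t : Fin n} : t ∈ minusSet ε ↔ ε t = false := by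
  simp [minusSet]

lemma minusExp_apply (ε : Fin n → Bool) (t : Fin n) :
    minusExp ε t = if ε t = false then 1 else 0 := by
  simp [minusExp, Finsupp.finsetSum_apply, Finsupp.single_apply, mem_minusSet]

lemma minusExp_injective : Function.Injective (minusExp (n := n)) := by
  intro ε ε' h
  funext t
  have ht := DFunLike.congr_fun h t
  simp only [minusExp_apply] at ht
  cases hε : ε t <;> cases hε' : ε' t <;> simp_all

lemma prod_X_minusSet (ε : Fin n → Bool) :
    ∏ t ∈ minusSet ε, (X t : MvPolynomial (Fin n) F) = monomial (minusExp ε) 1 := by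
  simp only [minusExp, monomial_sum_one, X]

lemma card_plusSet_add_card_minusSet (ε : Fin n → Bool) :
    (Finset.univ.filter fun t => ε t = true).card + (minusSet ε).card = n := by
  simpa [minusSet] using
    Finset.card_filter_add_card_filter_not (s := Finset.univ) (fun t => ε t = true)

lemma card_minusSet {k : ℕ} (ε : Stt n k) : (minusSet ε.1).card = n - k := by
  have := card_plusSet_add_card_minusSet ε.1
  rw [ε.2] at this
  omega

lemma degree_minusExp {k : ℕ} (ε : Stt n k) : (minusExp ε.1).degree = n - k := by
  simp [minusExp, map_sum, Finsupp.degree_single, card_minusSet]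

lemma exists_minusExp_eq {k : ℕ} (hkn : k ≤ n) {d : Fin n →₀ ℕ} (hd : ∀ t, d t ≤ 1)
    (hdeg : d.degree = n - k) : ∃ ε : Stt n k, minusExp ε.1 = d := by
  set ε : Fin n → Bool := fun t => decide (d t = 0)
  have hexp : minusExp ε = d := by
    ext t
    have := hd t
    by_cases h : d t = 0
    · simp [minusExp_apply, ε, h]
    · simp [minusExp_apply, ε, h]; omega
  have hcard : (minusSet ε).card = n - k := by
    rw [← hdeg, ← hexp, minusExp, map_sum]
    simp [Finsupp.degree_single]
  refine ⟨⟨ε, ?_⟩, hexp⟩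
  have := card_plusSet_add_card_minusSet ε
  omega

end MinusPositions

section PhiCoefficients

variable {n k : ℕ}

lemma Phi_bv (ε : Stt n k) :
    Phi n k (bv ε) = C (v⁻¹ ^ dstat ε.1) * ∏ t ∈ minusSet ε.1, X t := by
  rw [bv, ← Pi.basisFun_apply F, Phi, Module.Basis.constr_basis, minusSet]

lemma Phi_apply (m : M n k) :
    Phi n k m = ∑ ε : Stt n k, monomial (minusExp ε.1) (m ε * v⁻¹ ^ dstat ε.1) := by
  simp only [Phi, Module.Basis.constr_apply_fintype, Pi.basisFun_equivFun,
    LinearEquiv.refl_apply]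
  refine Finset.sum_congr rfl fun ε _ => ?_
  rw [← minusSet, prod_X_minusSet, C_mul_monomial, mul_one, smul_monomial, smul_eq_mul]

lemma coeff_Phi (m : M n k) (d : Fin n →₀ ℕ) :
    coeff d (Phi n k m) =
      ∑ ε : Stt n k, if minusExp ε.1 = d then m ε * v⁻¹ ^ dstat ε.1 else 0 := by
  simp only [Phi_apply, coeff_sum, coeff_monomial]

lemma coeff_minusExp_Phi (m : M n k) (ε : Stt n k) :
    coeff (minusExp ε.1) (Phi n k m) = m ε * v⁻¹ ^ dstat ε.1 := by
  have hinj : Function.Injective fun η : Stt n k => minusExp η.1 :=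
    minusExp_injective.comp Subtype.val_injective
  simp [coeff_Phi, hinj.eq_iff]

lemma Phi_injective : Function.Injective (Phi n k) := by
  intro m₁ m₂ h
  funext ε
  have hε := congrArg (coeff (minusExp ε.1)) h
  rw [coeff_minusExp_Phi, coeff_minusExp_Phi] at hε
  exact mul_right_cancel₀ (pow_ne_zero _ (inv_ne_zero v_ne_zero)) hε

lemma mem_Pspace_iff (hkn : k ≤ n) {f : MvPolynomial (Fin n) F} :
    f ∈ Pspace n k ↔ ∀ d ∈ f.support, ∃ ε : Stt n k, minusExp ε.1 = d := by
  simp only [Pspace, Set.mem_ofPred_eq, IsHomogeneous, IsWeightedHomogeneous, degreeOf_le_iff,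
    ← mem_support_iff, Pi.one_def, ← Finsupp.degree_eq_weight_one]
  constructor
  · rintro ⟨hhom, hdeg⟩ d hd
    exact exists_minusExp_eq hkn (fun t => hdeg t d hd) (hhom hd)
  · intro h
    refine ⟨fun {d} hd => ?_, fun t d hd => ?_⟩ <;> obtain ⟨ε, rfl⟩ := h _ hd
    · exact degree_minusExp ε
    · rw [minusExp_apply]; split <;> omega

lemma Phi_mem_Pspace (hkn : k ≤ n) (m : M n k) : Phi n k m ∈ Pspace n k := by
  rw [mem_Pspace_iff hkn]
  intro d hd
  rw [mem_support_iff, coeff_Phi] at hd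
  obtain ⟨ε, -, hε⟩ := Finset.exists_ne_zero_of_sum_ne_zero hd
  exact ⟨ε, of_not_not fun h => hε (if_neg h)⟩

lemma range_Phi (hkn : k ≤ n) : Set.range (Phi n k) = Pspace n k := by
  refine Set.Subset.antisymm (Set.range_subset_iff.mpr (Phi_mem_Pspace hkn)) fun f hf => ?_
  refine ⟨fun ε => coeff (minusExp ε.1) f * v ^ dstat ε.1, MvPolynomial.ext _ _ fun d => ?_⟩
  by_cases hd : ∃ ε : Stt n k, minusExp ε.1 = d
  · obtain ⟨ε, rfl⟩ := hd
    rw [coeff_minusExp_Phi, mul_assoc, ← mul_pow, mul_inv_cancel₀ v_ne_zero, one_pow, mul_one]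
  · rw [coeff_Phi, Finset.sum_eq_zero fun ε _ => if_neg fun h => hd ⟨ε, h⟩, eq_comm,
      ← notMem_support_iff]
    exact fun hmem => hd ((mem_Pspace_iff hkn).mp hf d hmem)

end PhiCoefficients

section AdjacentTransposition

variable {n : ℕ} {a b : Fin n}

lemma swap_lt_swap_iff (hab : (a : ℕ) + 1 = b) {p q : Fin n} :
    Equiv.swap a b p < Equiv.swap a b q ↔ p < q ∧ ¬(p = a ∧ q = b) ∨ p = b ∧ q = a := by
  simp only [Equiv.swap_apply_def, Fin.lt_def, Fin.ext_iff]
  split_ifs <;> omega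

lemma dstat_actE_swap (hab : (a : ℕ) + 1 = b) {ε : Fin n → Bool} (ha : ε a = true)
    (hb : ε b = false) : dstat (actE (Equiv.swap a b) ε) = dstat ε + 1 := by
  let e := Equiv.prodCongr (Equiv.swap a b) (Equiv.swap a b)
  have hpairs : (Finset.univ.filter fun pq : Fin n × Fin n =>
        pq.1 < pq.2 ∧ actE (Equiv.swap a b) ε pq.1 = false ∧ actE (Equiv.swap a b) ε pq.2 = true) =
      (insert (b, a) (Finset.univ.filter fun pq : Fin n × Fin n =>
        pq.1 < pq.2 ∧ ε pq.1 = false ∧ ε pq.2 = true)).map e.toEmbedding := by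
    ext ⟨p, q⟩
    obtain ⟨p, rfl⟩ := (Equiv.swap a b).surjective p
    obtain ⟨q, rfl⟩ := (Equiv.swap a b).surjective q
    rw [Finset.mem_filter]
    simp only [e, actE, swap_lt_swap_iff hab, Finset.mem_univ, true_and, Equiv.swap_inv,
      Equiv.swap_apply_self, Finset.mem_map_equiv, Equiv.prodCongr_symm, Equiv.prodCongr_apply,
      Prod.map, Equiv.symm_swap, Finset.mem_insert, Prod.ext_iff, Finset.mem_filter]
    constructor
    · rintro ⟨⟨hpq, -⟩ | hba, hp, hq⟩
      · exact Or.inr ⟨hpq, hp, hq⟩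
      · exact Or.inl hba
    · rintro (⟨rfl, rfl⟩ | ⟨hpq, hp, hq⟩)
      · exact ⟨Or.inr ⟨rfl, rfl⟩, hb, ha⟩
      · refine ⟨Or.inl ⟨hpq, ?_⟩, hp, hq⟩
        rintro ⟨rfl, -⟩
        simp [ha] at hp
  rw [dstat, hpairs, Finset.card_map, Finset.card_insert_of_notMem, dstat]
  simp only [Finset.mem_filter, Finset.mem_univ, true_and, Fin.lt_def]
  omega

lemma actE_swap_of_eq {ε : Fin n → Bool} (h : ε a = ε b) : actE (Equiv.swap a b) ε = ε := by
  funext t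
  simp only [actE, Equiv.swap_inv, Equiv.swap_apply_def]
  split_ifs with hta htb
  · rw [hta, h]
  · rw [htb, h]
  · rfl

lemma prod_minusSet_actE (w : Equiv.Perm (Fin n)) (ε : Fin n → Bool) :
    ∏ t ∈ minusSet (actE w ε), (X t : MvPolynomial (Fin n) F) =
      rename w (∏ t ∈ minusSet ε, X t) := by
  have : minusSet (actE w ε) = (minusSet ε).map w.toEmbedding := by
    ext t
    simp [mem_minusSet, Finset.mem_map_equiv, actE, Equiv.Perm.inv_def]
  simp [this, map_prod]

end AdjacentTransposition

section Intertwining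

variable {n k : ℕ} {a b : Fin n}

lemma sperm_eq_swap (hab : (a : ℕ) + 1 = b) : sperm n b = Equiv.swap a b := by
  rw [sperm, dif_pos ⟨by omega, b.2⟩]
  congr 1
  exact Fin.ext (by simp only; omega)

lemma swapf_eq_rename (hab : (a : ℕ) + 1 = b) (f : MvPolynomial (Fin n) F) :
    swapf n b f = rename (Equiv.swap a b) f := by
  rw [swapf, dif_pos ⟨by omega, b.2⟩, ← sperm_eq_swap hab, sperm, dif_pos ⟨by omega, b.2⟩]

lemma xv_succ (t : Fin n) : xv n (t + 1) = X t := by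
  rw [xv, dif_pos ⟨by omega, t.2⟩]
  rfl

lemma ddiff_eq_of_sub_rename_eq (hab : (a : ℕ) + 1 = b) {f g : MvPolynomial (Fin n) F}
    (h : f - rename (Equiv.swap a b) f = (X a - X b) * g) : ddiff n b f = g := by
  have hx : xv n b - xv n (b + 1) = X a - X b := by rw [← hab, xv_succ, hab, xv_succ]
  have hex : ∃ g, f - swapf n b f = (xv n b - xv n (b + 1)) * g := by
    rw [swapf_eq_rename hab, hx]; exact ⟨g, h⟩
  have hne : (X a - X b : MvPolynomial (Fin n) F) ≠ 0 :=
    sub_ne_zero.mpr (X_injective.ne fun hab' => by rw [hab'] at hab; omega)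
  rw [ddiff, dif_pos hex]
  refine mul_left_cancel₀ hne ?_
  rw [← h, ← hx, ← swapf_eq_rename hab]
  exact hex.choose_spec.symm

lemma Thk'_bv (hab : (a : ℕ) + 1 = b) (ε : Stt n k) :
    Thk' n k b (bv ε) =
      if ε.1 a = true ∧ ε.1 b = false then bv (actS (Equiv.swap a b) ε)
      else if ε.1 a = ε.1 b then v • bv ε
      else bv (actS (Equiv.swap a b) ε) + (v - v⁻¹) • bv ε := by
  have ha : (⟨(b : ℕ) - 1, by omega⟩ : Fin n) = a := by ext; simp only; omega
  rw [bv, ← Pi.basisFun_apply F, Thk', Module.Basis.constr_basis, dif_pos ⟨by omega, b.2⟩]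
  simp only [ha, Fin.eta, sperm_eq_swap hab, Pi.basisFun_apply]
  rfl

lemma Phi_bv_of_plus_minus (hab : (a : ℕ) + 1 = b) {ε : Stt n k} (ha : ε.1 a = true)
    (hb : ε.1 b = false) :
    ∃ R, rename (Equiv.swap a b) R = R ∧
      Phi n k (bv ε) = C (v⁻¹ ^ dstat ε.1) * X b * R ∧
      Phi n k (bv (actS (Equiv.swap a b) ε)) = C (v⁻¹ ^ dstat ε.1) * C v⁻¹ * X a * R := by
  set R := ∏ t ∈ (minusSet ε.1).erase b, (X t : MvPolynomial (Fin n) F)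
  have hR : rename (Equiv.swap a b) R = R := by
    rw [map_prod]
    refine Finset.prod_congr rfl fun t ht => ?_
    obtain ⟨htb, ht⟩ := Finset.mem_erase.mp ht
    have hta : t ≠ a := by rintro rfl; simp [mem_minusSet, ha] at ht
    rw [rename_X, Equiv.swap_apply_of_ne_of_ne hta htb]
  have hprod : ∏ t ∈ minusSet ε.1, (X t : MvPolynomial (Fin n) F) = X b * R :=
    (Finset.mul_prod_erase _ _ (mem_minusSet.mpr hb)).symm
  refine ⟨R, hR, by rw [Phi_bv, hprod, mul_assoc], ?_⟩
  rw [Phi_bv, actS, dstat_actE_swap hab ha hb, prod_minusSet_actE, hprod, map_mul, rename_X,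
    Equiv.swap_apply_right, hR, pow_succ, map_mul]
  ring

lemma exists_common_quotient_bv (hab : (a : ℕ) + 1 = b) (ε : Stt n k) :
    ∃ g, Phi n k (bv ε) - rename (Equiv.swap a b) (Phi n k (bv ε)) = (X a - X b) * g ∧
      Phi n k (Thk' n k b (bv ε)) - v • Phi n k (bv ε) = (C v * X b - C v⁻¹ * X a) * g := by
  have hCv : (C v * C v⁻¹ : MvPolynomial (Fin n) F) = 1 := by
    rw [← map_mul, mul_inv_cancel₀ v_ne_zero, map_one]
  rw [Thk'_bv hab]
  by_cases heq : ε.1 a = ε.1 b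
  · refine ⟨0, ?_, ?_⟩
    · rw [Phi_bv, map_mul, rename_C, ← prod_minusSet_actE, actE_swap_of_eq heq, sub_self,
        mul_zero]
    · rw [if_neg (by rintro ⟨h1, h2⟩; simp [h1, h2] at heq), if_pos heq, map_smul, sub_self,
        mul_zero]
  obtain ⟨ha, hb⟩ | ⟨ha, hb⟩ : ε.1 a = false ∧ ε.1 b = true ∨ ε.1 a = true ∧ ε.1 b = false := by
    cases h1 : ε.1 a <;> cases h2 : ε.1 b <;> simp_all
  · rw [if_neg (by simp [ha]), if_neg heq]
    set η := actS (Equiv.swap a b) ε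
    have hηη : actS (Equiv.swap a b) η = ε := by
      apply Subtype.ext
      funext t
      simp [η, actS, actE]
    obtain ⟨R, hR, hη, hε⟩ := Phi_bv_of_plus_minus hab (ε := η) (by simp [η, actS, actE, hb])
      (by simp [η, actS, actE, ha])
    rw [hηη] at hε
    refine ⟨C (v⁻¹ ^ dstat η.1) * C v⁻¹ * R, ?_, ?_⟩
    · rw [hε, map_mul, map_mul, map_mul, rename_C, rename_C, rename_X, Equiv.swap_apply_left, hR]
      ring
    · rw [map_add, map_smul, hη, hε, smul_eq_C_mul, smul_eq_C_mul, map_sub]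
      linear_combination (-(C (v⁻¹ ^ dstat η.1) * X b * R)) * hCv
  · rw [if_pos ⟨ha, hb⟩]
    obtain ⟨R, hR, hε, hη⟩ := Phi_bv_of_plus_minus hab ha hb
    refine ⟨-(C (v⁻¹ ^ dstat ε.1) * R), ?_, ?_⟩
    · rw [hε, map_mul, map_mul, rename_C, rename_X, Equiv.swap_apply_right, hR]
      ring
    · rw [hη, hε, smul_eq_C_mul]
      ring

lemma exists_common_quotient (hab : (a : ℕ) + 1 = b) (m : M n k) :
    ∃ g, Phi n k m - rename (Equiv.swap a b) (Phi n k m) = (X a - X b) * g ∧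
      Phi n k (Thk' n k b m) - v • Phi n k m = (C v * X b - C v⁻¹ * X a) * g := by
  let L : M n k →ₗ[F] MvPolynomial (Fin n) F × MvPolynomial (Fin n) F :=
    (Phi n k - (rename (Equiv.swap a b)).toLinearMap ∘ₗ Phi n k).prod
      (Phi n k ∘ₗ Thk' n k b - v • Phi n k)
  let K : MvPolynomial (Fin n) F →ₗ[F] MvPolynomial (Fin n) F × MvPolynomial (Fin n) F :=
    (LinearMap.mulLeft F (X a - X b)).prod (LinearMap.mulLeft F (C v * X b - C v⁻¹ * X a))
  have hLK : (⊤ : Submodule F (M n k)) ≤ (LinearMap.range K).comap L := by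
    rw [← (Pi.basisFun F (Stt n k)).span_eq, Submodule.span_le]
    rintro _ ⟨ε, rfl⟩
    obtain ⟨g, h₁, h₂⟩ := exists_common_quotient_bv hab ε
    refine ⟨g, ?_⟩
    rw [Pi.basisFun_apply, ← bv]
    simp only [K, L, LinearMap.prod_apply, Function.prod_apply, LinearMap.mulLeft_apply,
      LinearMap.sub_apply, LinearMap.comp_apply, AlgHom.toLinearMap_apply, LinearMap.smul_apply,
      h₁, h₂]
  obtain ⟨g, hg⟩ := hLK (Submodule.mem_top (x := m))
  simp only [K, L, LinearMap.prod_apply, Function.prod_apply, LinearMap.mulLeft_apply,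
    LinearMap.sub_apply, LinearMap.comp_apply, AlgHom.toLinearMap_apply, LinearMap.smul_apply,
    Prod.ext_iff] at hg
  exact ⟨g, hg.1.symm, hg.2.symm⟩

lemma Phi_Thk'_sub_smul (hab : (a : ℕ) + 1 = b) (m : M n k) :
    Phi n k (Thk' n k b m - v • m) = nabla n b (Phi n k m) := by
  obtain ⟨g, hswap, hT⟩ := exists_common_quotient hab m
  rw [map_sub, map_smul, hT, nabla, ddiff_eq_of_sub_rename_eq hab hswap, ← hab, xv_succ, hab,
    xv_succ]

end Intertwining

theorem Phi_isomorphism_general (n k : ℕ) (hkn : k < n) :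
    Function.Injective (Phi n k) ∧
    Set.range (Phi n k) = Pspace n k ∧
    (∀ m : M n k, ∀ i : ℕ, 1 ≤ i → i < n →
      Phi n k (Thk' n k i m - v • m) = nabla n i (Phi n k m)) :=
  ⟨Phi_injective, range_Phi hkn.le, fun m i hi hin =>
    Phi_Thk'_sub_smul (a := ⟨i - 1, by omega⟩) (b := ⟨i, hin⟩) (by simp only; omega) m⟩

/-- Φ : M′ → ℚ(v)[x_1,…,x_n], ε ↦ v^(−d(ε)) ∏_(ε_t = −) x_t, is a
linear isomorphism onto P(k,n) intertwining T_i − v with ∇_i. -/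
theorem Phi_isomorphism (n k : ℕ) (hk : 0 < k) (hkn : k < n) :
    Function.Injective (Phi n k) ∧
    Set.range (Phi n k) = Pspace n k ∧
    (∀ m : M n k, ∀ i : ℕ, 1 ≤ i → i < n →
      Phi n k (Thk' n k i m - v • m) = nabla n i (Phi n k m)) :=
  Phi_isomorphism_general n k hkn
end
end
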